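/- Let h* : ℝ^{d'} → ℝ ∪ {+∞} be proper, convex, closed, let μ, μ' > 0, β > 0, and let v, w ∈ ℝ^{d'}. Set v⁺ = prox_{(β/μ') h*}( v + (β/μ') w ). Then for all v' ∈ dom h*: (β/μ) h*(v') ≥ (β/μ) h*(v⁺) + ⟨ v + (β/μ) w − v⁺, v' − v⁺ ⟩ − β|1/μ' − 1/μ| ( |h*(v⁺) − h*(v')| + ‖w‖₂ ‖v' − v⁺‖₂ ). -/

import Mathlib

/-! Minimality of `v⁺` for the prox objective, compared with the points `v⁺ + t • (v' - v⁺)` of the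
segment to `v'` (where convexity bounds `H`) and letting `t → 0`, gives the exact subgradient
inequality `⟪a - v⁺, v' - v⁺⟫ ≤ (β/μ') (H v' - H v⁺)` for `a = v + (β/μ') • w`. Replacing `β/μ'`
by `β/μ` changes both sides by at most `|β/μ - β/μ'|` times `|H v⁺ - H v'|`, respectively
`‖w‖ ‖v' - v⁺‖` (Cauchy–Schwarz). -/

open scoped RealInnerProductSpace

/-- `p` is the proximal point of `F` at `a`, i.e. `p` minimizes `u ↦ ½‖u − a‖² + F(u)`
(for a proper convex closed `F` this minimizer exists and is unique, so this predicate
characterizes `p = prox_F(a)`). -/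
def IsProx {E : Type*} [NormedAddCommGroup E] (F : E → EReal) (a p : E) : Prop :=
  ∀ u, ((1 / 2 * ‖p - a‖ ^ 2 : ℝ) : EReal) + F p ≤ ((1 / 2 * ‖u - a‖ ^ 2 : ℝ) : EReal) + F u

theorem le_of_forall_le_add_mul {x y k : ℝ} (h : ∀ t : ℝ, 0 < t → t ≤ 1 → x ≤ y + t * k) :
    x ≤ y := by
  have hlim : Filter.Tendsto (fun t : ℝ => y + t * k) (nhdsWithin 0 (Set.Ioi 0)) (nhds y) :=
    ((continuous_const.add (continuous_id.mul continuous_const)).tendsto' 0 y (by simp)).mono_left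
      nhdsWithin_le_nhds
  exact ge_of_tendsto hlim <|
    Filter.mem_of_superset (Ioc_mem_nhdsGT one_pos) fun t ht => h t ht.1 ht.2

theorem convex_comb_le_coe_toReal {E : Type*} [AddCommMonoid E] [Module ℝ E] {H : E → EReal}
    (hH_bot : ∀ z, H z ≠ ⊥)
    (hH_conv : ∀ u v : E, ∀ a b : ℝ, 0 ≤ a → 0 ≤ b → a + b = 1 →
      H (a • u + b • v) ≤ (a : EReal) * H u + (b : EReal) * H v)
    {x y : E} (hx : H x ≠ ⊤) (hy : H y ≠ ⊤) {a b : ℝ} (ha : 0 ≤ a) (hb : 0 ≤ b) (hab : a + b = 1) :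
    H (a • x + b • y) ≤ ((a * (H x).toReal + b * (H y).toReal : ℝ) : EReal) := by
  have h := hH_conv x y a b ha hb hab
  rwa [← EReal.coe_toReal hx (hH_bot x), ← EReal.coe_toReal hy (hH_bot y), ← EReal.coe_mul,
    ← EReal.coe_mul, ← EReal.coe_add] at h

theorem IsProx.ne_top {E : Type*} [NormedAddCommGroup E] {H : E → EReal} {c : ℝ} {a p : E}
    (hc : 0 < c) (hprox : IsProx (fun z => (c : EReal) * H z) a p) (hH_bot : ∀ z, H z ≠ ⊥) {u : E}
    (hu : H u ≠ ⊤) : H p ≠ ⊤ := by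
  intro hp
  have h := hprox u
  beta_reduce at h
  rw [hp, EReal.coe_mul_top_of_pos hc, EReal.add_top_of_ne_bot (EReal.coe_ne_bot _),
    ← EReal.coe_toReal hu (hH_bot u), ← EReal.coe_mul, ← EReal.coe_add] at h
  exact EReal.coe_ne_top _ (top_le_iff.mp h)

theorem IsProx.inner_le_mul_sub {E : Type*} [NormedAddCommGroup E] [InnerProductSpace ℝ E]
    {H : E → EReal} {c : ℝ} {a p : E} (hc : 0 ≤ c)
    (hprox : IsProx (fun z => (c : EReal) * H z) a p) (hH_bot : ∀ z, H z ≠ ⊥)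
    (hH_conv : ∀ x y : E, ∀ s t : ℝ, 0 ≤ s → 0 ≤ t → s + t = 1 →
      H (s • x + t • y) ≤ (s : EReal) * H x + (t : EReal) * H y)
    (hp : H p ≠ ⊤) {u : E} (hu : H u ≠ ⊤) :
    ⟪a - p, u - p⟫ ≤ c * ((H u).toReal - (H p).toReal) := by
  set d := u - p
  refine le_of_forall_le_add_mul (k := ‖d‖ ^ 2 / 2) fun t ht ht1 => ?_
  have hz : (1 - t) • p + t • u = p + t • d := by simp only [d]; module
  have hconv := convex_comb_le_coe_toReal hH_bot hH_conv hp hu (sub_nonneg.2 ht1) ht.le (by ring)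
  rw [hz] at hconv
  have hmin := hprox (p + t • d)
  beta_reduce at hmin
  replace hmin := hmin.trans
    (add_le_add_right (mul_le_mul_of_nonneg_left hconv (EReal.coe_nonneg.2 hc)) _)
  rw [← EReal.coe_toReal hp (hH_bot p), ← EReal.coe_mul, ← EReal.coe_add, ← EReal.coe_mul,
    ← EReal.coe_add, EReal.coe_le_coe_iff, EReal.toReal_coe] at hmin
  have hexp : ‖p + t • d - a‖ ^ 2 = ‖p - a‖ ^ 2 - 2 * t * ⟪a - p, d⟫ + t ^ 2 * ‖d‖ ^ 2 := by
    rw [show p + t • d - a = (p - a) + t • d by abel, norm_add_sq_real, real_inner_smul_right,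
      norm_smul, Real.norm_of_nonneg ht.le, ← neg_sub a p, inner_neg_left]
    ring
  rw [hexp] at hmin
  have hscaled : 0 ≤ t * (c * ((H u).toReal - (H p).toReal) + t * (‖d‖ ^ 2 / 2) - ⟪a - p, d⟫) := by
    linear_combination hmin
  linarith [nonneg_of_mul_nonneg_right hscaled ht]

theorem inner_add_smul_sub_le_of_perturbed {E : Type*} [NormedAddCommGroup E]
    [InnerProductSpace ℝ E] {v w p d : E} {c c' r : ℝ}
    (h : ⟪v + c' • w - p, d⟫ ≤ c' * r) :
    ⟪v + c • w - p, d⟫ ≤ c * r + |c - c'| * (|r| + ‖w‖ * ‖d‖) := by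
  have hsplit : ⟪v + c • w - p, d⟫ = ⟪v + c' • w - p, d⟫ + (c - c') * ⟪w, d⟫ := by
    rw [show v + c • w - p = (v + c' • w - p) + (c - c') • w by module, inner_add_left,
      real_inner_smul_left]
  have hr : (c' - c) * r ≤ |c - c'| * |r| := by
    rw [abs_sub_comm c c', ← abs_mul]; exact le_abs_self _
  have hw : (c - c') * ⟪w, d⟫ ≤ |c - c'| * (‖w‖ * ‖d‖) :=
    calc (c - c') * ⟪w, d⟫ ≤ |c - c'| * |⟪w, d⟫| := by rw [← abs_mul]; exact le_abs_self _
      _ ≤ |c - c'| * (‖w‖ * ‖d‖) := by gcongr; exact abs_real_inner_le_norm w d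
  linarith

theorem prox_with_perturbed_parameter_eps_subgradient_general {d' : ℕ}
    (H : EuclideanSpace ℝ (Fin d') → EReal)
    (hH_bot : ∀ z, H z ≠ ⊥)
    (hH_conv : ∀ u v : EuclideanSpace ℝ (Fin d'), ∀ a b : ℝ, 0 ≤ a → 0 ≤ b → a + b = 1 →
      H (a • u + b • v) ≤ (a : EReal) * H u + (b : EReal) * H v)
    (mu mu' β : ℝ) (hmu' : 0 < mu') (hβ : 0 < β)
    (v w vplus : EuclideanSpace ℝ (Fin d'))
    (hprox : IsProx (fun z => ((β / mu' : ℝ) : EReal) * H z) (v + (β / mu') • w) vplus) :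
    ∀ v' : EuclideanSpace ℝ (Fin d'), H v' ≠ ⊤ →
      β / mu * (H v').toReal
        ≥ β / mu * (H vplus).toReal + ⟪v + (β / mu) • w - vplus, v' - vplus⟫
          - β * |1 / mu' - 1 / mu| *
              (|(H vplus).toReal - (H v').toReal| + ‖w‖ * ‖v' - vplus‖) := by
  intro v' hv'
  have hc : 0 < β / mu' := div_pos hβ hmu'
  have hsub := hprox.inner_le_mul_sub hc.le hH_bot hH_conv (hprox.ne_top hc hH_bot hv') hv'
  have hpert := inner_add_smul_sub_le_of_perturbed (c := β / mu) hsub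
  have hscale : |β / mu - β / mu'| = β * |1 / mu' - 1 / mu| := by
    rw [show β / mu - β / mu' = β * (1 / mu - 1 / mu') by ring, abs_mul, abs_of_pos hβ,
      abs_sub_comm]
  rw [hscale, abs_sub_comm (H v').toReal] at hpert
  linarith

/-- Let `H = h*` be proper convex closed and `v⁺ = prox_{(β/μ')H}(v + (β/μ')w)`. Then
for all `v' ∈ dom H`:
`(β/μ)H(v') ≥ (β/μ)H(v⁺) + ⟨v + (β/μ)w − v⁺, v' − v⁺⟩ − β|1/μ' − 1/μ|(|H(v⁺) − H(v')| + ‖w‖‖v' − v⁺‖)`,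
i.e. `v + (β/μ)w − v⁺` is an `ε`-subgradient of `(β/μ)H` at `v⁺`. -/
theorem prox_with_perturbed_parameter_eps_subgradient {d' : ℕ}
    (H : EuclideanSpace ℝ (Fin d') → EReal)
    (hH_top : ∃ z, H z ≠ ⊤) (hH_bot : ∀ z, H z ≠ ⊥)
    (hH_conv : ∀ u v : EuclideanSpace ℝ (Fin d'), ∀ a b : ℝ, 0 ≤ a → 0 ≤ b → a + b = 1 →
      H (a • u + b • v) ≤ (a : EReal) * H u + (b : EReal) * H v)
    (hH_lsc : LowerSemicontinuous H)
    (mu mu' β : ℝ) (hmu : 0 < mu) (hmu' : 0 < mu') (hβ : 0 < β)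
    (v w vplus : EuclideanSpace ℝ (Fin d'))
    (hprox : IsProx (fun z => ((β / mu' : ℝ) : EReal) * H z) (v + (β / mu') • w) vplus) :
    ∀ v' : EuclideanSpace ℝ (Fin d'), H v' ≠ ⊤ →
      β / mu * (H v').toReal
        ≥ β / mu * (H vplus).toReal + ⟪v + (β / mu) • w - vplus, v' - vplus⟫
          - β * |1 / mu' - 1 / mu| *
              (|(H vplus).toReal - (H v').toReal| + ‖w‖ * ‖v' - vplus‖) :=
  prox_with_perturbed_parameter_eps_subgradient_general H hH_bot hH_conv mu mu' β hmu' hβ v w vplus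
    hprox
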